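/- arXiv:2312.16439 — 4 statements merged into one kernel-verified Lean document; each statement's English description precedes it below -/
import Mathlib

section
/- (Two-point identification, discrete version.) Let Y(0), Y(1) be square-integrable real random variables and Z binary with p = Pr(Z=1) ∈ (0,1). Let Y = Z·Y(1)+(1−Z)·Y(0), β = E[Y|Z=1] − E[Y|Z=0], τ = E[Y(1) − Y(0)|Z=1], σ² = Var(Y), σ₀² = Var(Y(0)). If Var(Y(0)|Z=1) = Var(Y(1)|Z=1), then (β − τ)² = β² − (σ² − σ₀²)/(p(1−p)). -/
open MeasureTheory ProbabilityTheory

lemma tpi_integral_cond {Ω : Type*} [MeasurableSpace Ω] (μ : Measure Ω)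
    (f : Ω → ℝ) (s : Set Ω) :
    ∫ ω, f ω ∂(μ[|s]) = (μ s).toReal⁻¹ * ∫ ω in s, f ω ∂μ := by
  rw [ProbabilityTheory.cond, integral_smul_measure, ENNReal.toReal_inv, smul_eq_mul]

lemma tpi_memℒp_cond {Ω : Type*} [MeasurableSpace Ω] (μ : Measure Ω)
    {f : Ω → ℝ} (hf : MemLp f 2 μ) (s : Set Ω) (hs : μ s ≠ 0) : MemLp f 2 (μ[|s]) := by
  rw [ProbabilityTheory.cond]
  exact (hf.restrict s).smul_measure (ENNReal.inv_ne_top.2 hs)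

/-- Two-point identification (discrete version, Theorem 1 without covariates):
under the equal-conditional-variance assumption,
`(β − τ)² = β² − (σ² − σ₀²)/(p(1−p))`. -/
theorem two_point_identification
    {Ω : Type*} [MeasurableSpace Ω] (μ : Measure Ω) [IsProbabilityMeasure μ]
    (Y0 Y1 Z : Ω → ℝ) (hY0 : MemLp Y0 2 μ) (hY1 : MemLp Y1 2 μ)
    (hZ : Measurable Z) (hZbin : ∀ ω, Z ω = 0 ∨ Z ω = 1)
    (p : ℝ) (hp : p = (μ (Z ⁻¹' {1})).toReal) (hp0 : 0 < p) (hp1 : p < 1)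
    (Y : Ω → ℝ) (hY : Y = fun ω => Z ω * Y1 ω + (1 - Z ω) * Y0 ω)
    (β τ σ2 σ02 : ℝ)
    (hβ : β = (∫ ω, Y ω ∂(μ[|Z ⁻¹' {1}])) - (∫ ω, Y ω ∂(μ[|Z ⁻¹' {0}])))
    (hτ : τ = ∫ ω, (Y1 ω - Y0 ω) ∂(μ[|Z ⁻¹' {1}]))
    (hσ2 : σ2 = variance Y μ) (hσ02 : σ02 = variance Y0 μ)
    (hvareq : variance Y0 (μ[|Z ⁻¹' {1}]) = variance Y1 (μ[|Z ⁻¹' {1}])) :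
    (β - τ) ^ 2 = β ^ 2 - (σ2 - σ02) / (p * (1 - p)) := by
  set A : Set Ω := Z ⁻¹' {1} with hA_def
  set B : Set Ω := Z ⁻¹' {0} with hB_def
  have hA : MeasurableSet A := hZ (measurableSet_singleton 1)
  have hBA : B = Aᶜ := by
    ext ω
    simp only [hA_def, hB_def, Set.mem_preimage, Set.mem_singleton_iff, Set.mem_compl_iff]
    rcases hZbin ω with h | h <;> simp [h]
  have hpA : (μ A).toReal = p := hp.symm
  have hμA0 : μ A ≠ 0 := by
    intro h; rw [hp, h] at hp0; simp at hp0
  have hqB : (μ B).toReal = 1 - p := by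
    rw [hBA, measure_compl hA (measure_ne_top μ A), measure_univ,
      ENNReal.toReal_sub_of_le (prob_le_one) ENNReal.one_ne_top, ENNReal.toReal_one, hpA]
  have hμB0 : μ B ≠ 0 := by
    intro h
    rw [h] at hqB
    simp at hqB
    linarith
  -- pointwise descriptions of Y on A and B
  have hYA : ∀ ω ∈ A, Y ω = Y1 ω := by
    intro ω hω
    simp only [hA_def, Set.mem_preimage, Set.mem_singleton_iff] at hω
    simp [hY, hω]
  have hYB : ∀ ω ∈ B, Y ω = Y0 ω := by
    intro ω hω
    simp only [hB_def, Set.mem_preimage, Set.mem_singleton_iff] at hω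
    simp [hY, hω]
  -- MemLp of Y
  have hYm : MemLp Y 2 μ := by
    have hsm : AEStronglyMeasurable Y μ := by
      rw [hY]
      exact (hZ.aemeasurable.aestronglyMeasurable.mul hY1.aestronglyMeasurable).add
        (((aestronglyMeasurable_const.sub hZ.aemeasurable.aestronglyMeasurable)).mul
          hY0.aestronglyMeasurable)
    have hbound : ∀ᵐ ω ∂μ, ‖Y ω‖ ≤ ‖‖Y1 ω‖ + ‖Y0 ω‖‖ := by
      filter_upwards with ω
      have h1 : ‖Y ω‖ ≤ ‖Y1 ω‖ + ‖Y0 ω‖ := by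
        rcases hZbin ω with h | h
        · have hh : Y ω = Y0 ω := by simp [hY, h]
          rw [hh]; exact le_add_of_nonneg_left (norm_nonneg _)
        · have hh : Y ω = Y1 ω := by simp [hY, h]
          rw [hh]; exact le_add_of_nonneg_right (norm_nonneg _)
      refine h1.trans ?_
      rw [Real.norm_eq_abs]; exact le_abs_self _
    exact MemLp.of_le (hY1.norm.add hY0.norm) hsm hbound
  -- abbreviations for the six basic moments
  set I1 : ℝ := ∫ ω in A, Y1 ω ∂μ with hI1
  set I0A : ℝ := ∫ ω in A, Y0 ω ∂μ with hI0A
  set I0B : ℝ := ∫ ω in B, Y0 ω ∂μ with hI0B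
  set J1 : ℝ := ∫ ω in A, (Y1 ω) ^ 2 ∂μ with hJ1
  set J0A : ℝ := ∫ ω in A, (Y0 ω) ^ 2 ∂μ with hJ0A
  set J0B : ℝ := ∫ ω in B, (Y0 ω) ^ 2 ∂μ with hJ0B
  -- integrability facts
  have hiY1 : Integrable Y1 μ := hY1.integrable one_le_two
  have hiY0 : Integrable Y0 μ := hY0.integrable one_le_two
  -- β in terms of the moments
  have hβ' : β = p⁻¹ * I1 - (1 - p)⁻¹ * I0B := by
    rw [hβ, tpi_integral_cond, tpi_integral_cond, hpA, hqB,
      setIntegral_congr_fun hA hYA, setIntegral_congr_fun (by rw [hBA]; exact hA.compl) hYB]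
  -- τ in terms of the moments
  have hτ' : τ = p⁻¹ * (I1 - I0A) := by
    rw [hτ, tpi_integral_cond, hpA,
      integral_sub (hiY1.restrict) (hiY0.restrict)]
  -- probability measure on the conditional measure
  haveI : IsProbabilityMeasure (μ[|A]) := cond_isProbabilityMeasure hμA0
  -- conditional variance hypothesis in terms of the moments
  have hvar' : p⁻¹ * J0A - (p⁻¹ * I0A) ^ 2 = p⁻¹ * J1 - (p⁻¹ * I1) ^ 2 := by
    have e0 := variance_eq_sub (tpi_memℒp_cond μ hY0 A hμA0)
    have e1 := variance_eq_sub (tpi_memℒp_cond μ hY1 A hμA0)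
    simp only [Pi.pow_apply] at e0 e1
    rw [e0, e1] at hvareq
    rw [show (∫ ω, (Y0 ω) ^ 2 ∂(μ[|A])) = p⁻¹ * J0A by rw [tpi_integral_cond, hpA],
      show (∫ ω, (Y1 ω) ^ 2 ∂(μ[|A])) = p⁻¹ * J1 by rw [tpi_integral_cond, hpA],
      show (∫ ω, Y0 ω ∂(μ[|A])) = p⁻¹ * I0A by rw [tpi_integral_cond, hpA],
      show (∫ ω, Y1 ω ∂(μ[|A])) = p⁻¹ * I1 by rw [tpi_integral_cond, hpA]] at hvareq
    exact hvareq
  -- total variances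
  have hσ2' : σ2 = (J1 + J0B) - (I1 + I0B) ^ 2 := by
    rw [hσ2, variance_eq_sub hYm]
    have hB : MeasurableSet B := hZ (measurableSet_singleton 0)
    have h2 : (∫ ω, (Y ω) ^ 2 ∂μ) = J1 + J0B := by
      rw [← integral_add_compl hA hYm.integrable_sq, ← hBA]
      congr 1
      · exact setIntegral_congr_fun hA (fun ω hω => by rw [hYA ω hω])
      · exact setIntegral_congr_fun hB (fun ω hω => by rw [hYB ω hω])
    have h1 : (∫ ω, Y ω ∂μ) = I1 + I0B := by
      rw [← integral_add_compl hA (hYm.integrable one_le_two), ← hBA]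
      congr 1
      · exact setIntegral_congr_fun hA hYA
      · exact setIntegral_congr_fun hB hYB
    simp only [Pi.pow_apply]
    rw [h2, h1]
  have hσ02' : σ02 = (J0A + J0B) - (I0A + I0B) ^ 2 := by
    rw [hσ02, variance_eq_sub hY0]
    have h2 : (∫ ω, (Y0 ω) ^ 2 ∂μ) = J0A + J0B := by
      rw [← integral_add_compl hA hY0.integrable_sq, ← hBA]
    have h1 : (∫ ω, Y0 ω ∂μ) = I0A + I0B := by
      rw [← integral_add_compl hA hiY0, ← hBA]
    simp only [Pi.pow_apply]
    rw [h2, h1]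
  -- final algebra
  have hp' : p ≠ 0 := ne_of_gt hp0
  have hq' : (1 : ℝ) - p ≠ 0 := by linarith
  rw [hβ', hτ', hσ2', hσ02']
  have key : J1 = J0A + p⁻¹ * (I1 ^ 2 - I0A ^ 2) := by
    field_simp at hvar' ⊢
    nlinarith [hvar']
  rw [key]
  field_simp
  ring
end

section
/- (Two candidate values.) Under the setup and assumption of the two-point identification identity, the average treatment effect on the treated τ = E[Y(1)−Y(0)|Z=1] is equal to either β + √(β² − (σ² − σ₀²)/(p(1−p))) or β − √(β² − (σ² − σ₀²)/(p(1−p))), and in particular β² − (σ² − σ₀²)/(p(1−p)) ≥ 0. -/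
open MeasureTheory ProbabilityTheory

section Aux
variable {Ω : Type*} [MeasurableSpace Ω]

lemma two_point_cond_int (μ : Measure Ω) (A : Set Ω) (f : Ω → ℝ) :
    ∫ ω, f ω ∂(μ[|A]) = (μ A).toReal⁻¹ * ∫ ω in A, f ω ∂μ := by
  rw [ProbabilityTheory.cond, integral_smul_measure, ENNReal.toReal_inv, smul_eq_mul]

lemma two_point_memLp_cond (μ : Measure Ω) (A : Set Ω) {f : Ω → ℝ} (hf : MemLp f 2 μ)
    (h0 : μ A ≠ 0) : MemLp f 2 (μ[|A]) :=
  (hf.restrict A).smul_measure (by simpa using h0)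

lemma two_point_set_int_eq (μ : Measure Ω) (A : Set Ω) (f : Ω → ℝ)
    {p : ℝ} (hp : (μ A).toReal = p) (hp0 : p ≠ 0) :
    ∫ ω in A, f ω ∂μ = p * ∫ ω, f ω ∂(μ[|A]) := by
  rw [two_point_cond_int, hp]; field_simp

lemma two_point_cond_congr (μ : Measure Ω) {A : Set Ω} (hA : MeasurableSet A)
    {f g : Ω → ℝ} (h : ∀ ω ∈ A, f ω = g ω) :
    ∫ ω, f ω ∂(μ[|A]) = ∫ ω, g ω ∂(μ[|A]) := by
  refine integral_congr_ae ?_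
  rw [ProbabilityTheory.cond]
  exact Measure.ae_smul_measure (ae_restrict_of_forall_mem hA h) _

lemma two_point_var_split (μ : Measure Ω) [IsProbabilityMeasure μ] {A : Set Ω}
    (hA : MeasurableSet A) {p : ℝ} (hpA : (μ A).toReal = p) (hpAc : (μ Aᶜ).toReal = 1 - p)
    (hp0 : p ≠ 0) (hp1 : (1:ℝ) - p ≠ 0) {f : Ω → ℝ} (hf : MemLp f 2 μ) :
    variance f μ = (p * ∫ ω, f ω ^ 2 ∂(μ[|A]) + (1-p) * ∫ ω, f ω ^ 2 ∂(μ[|Aᶜ]))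
      - (p * ∫ ω, f ω ∂(μ[|A]) + (1-p) * ∫ ω, f ω ∂(μ[|Aᶜ]))^2 := by
  rw [variance_eq_sub hf]
  have h1 : ∫ ω, f ω ∂μ = p * ∫ ω, f ω ∂(μ[|A]) + (1-p) * ∫ ω, f ω ∂(μ[|Aᶜ]) := by
    rw [← integral_add_compl hA (hf.integrable one_le_two),
      two_point_set_int_eq μ A f hpA hp0, two_point_set_int_eq μ Aᶜ f hpAc hp1]
  have h2 : ∫ ω, f ω ^ 2 ∂μ = p * ∫ ω, f ω ^ 2 ∂(μ[|A]) + (1-p) * ∫ ω, f ω ^ 2 ∂(μ[|Aᶜ]) := by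
    rw [← integral_add_compl hA hf.integrable_sq,
      two_point_set_int_eq μ A (fun ω => f ω ^ 2) hpA hp0,
      two_point_set_int_eq μ Aᶜ (fun ω => f ω ^ 2) hpAc hp1]
  simp only [Pi.pow_apply]
  rw [h1, h2]

end Aux

/-- Two candidate values: the ATT `τ` equals one of the two roots, and the
radicand is nonnegative. -/
theorem two_point_values
    {Ω : Type*} [MeasurableSpace Ω] (μ : Measure Ω) [IsProbabilityMeasure μ]
    (Y0 Y1 Z : Ω → ℝ) (hY0 : MemLp Y0 2 μ) (hY1 : MemLp Y1 2 μ)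
    (hZ : Measurable Z) (hZbin : ∀ ω, Z ω = 0 ∨ Z ω = 1)
    (p : ℝ) (hp : p = (μ (Z ⁻¹' {1})).toReal) (hp0 : 0 < p) (hp1 : p < 1)
    (Y : Ω → ℝ) (hY : Y = fun ω => Z ω * Y1 ω + (1 - Z ω) * Y0 ω)
    (β τ σ2 σ02 : ℝ)
    (hβ : β = (∫ ω, Y ω ∂(μ[|Z ⁻¹' {1}])) - (∫ ω, Y ω ∂(μ[|Z ⁻¹' {0}])))
    (hτ : τ = ∫ ω, (Y1 ω - Y0 ω) ∂(μ[|Z ⁻¹' {1}]))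
    (hσ2 : σ2 = variance Y μ) (hσ02 : σ02 = variance Y0 μ)
    (hvareq : variance Y0 (μ[|Z ⁻¹' {1}]) = variance Y1 (μ[|Z ⁻¹' {1}])) :
    (τ = β + Real.sqrt (β ^ 2 - (σ2 - σ02) / (p * (1 - p))) ∨
      τ = β - Real.sqrt (β ^ 2 - (σ2 - σ02) / (p * (1 - p)))) ∧
      0 ≤ β ^ 2 - (σ2 - σ02) / (p * (1 - p)) := by
  set A := Z ⁻¹' {1} with hAdef
  have hA : MeasurableSet A := hZ (measurableSet_singleton 1)
  have hB : Z ⁻¹' {0} = Aᶜ := by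
    ext ω
    simp only [Set.mem_preimage, Set.mem_singleton_iff, Set.mem_compl_iff, hAdef]
    rcases hZbin ω with h | h <;> simp [h]
  have hpA : (μ A).toReal = p := hp.symm
  have hp0' : p ≠ 0 := ne_of_gt hp0
  have hp1' : (1:ℝ) - p ≠ 0 := by linarith
  have hμA0 : μ A ≠ 0 := by
    intro h; rw [h] at hpA; simp at hpA; exact hp0' hpA.symm
  have hpAc : (μ Aᶜ).toReal = 1 - p := by
    rw [prob_compl_eq_one_sub hA, ENNReal.toReal_sub_of_le prob_le_one (by simp), hpA,
      ENNReal.toReal_one]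
  have hμAc0 : μ Aᶜ ≠ 0 := by
    intro h; rw [h] at hpAc; simp at hpAc; linarith
  haveI hPA : IsProbabilityMeasure (μ[|A]) := cond_isProbabilityMeasure hμA0
  haveI hPAc : IsProbabilityMeasure (μ[|Aᶜ]) := cond_isProbabilityMeasure hμAc0
  -- pointwise facts
  have hYA : ∀ ω ∈ A, Y ω = Y1 ω := by
    intro ω hω
    have : Z ω = 1 := hω
    simp [hY, this]
  have hYAc : ∀ ω ∈ Aᶜ, Y ω = Y0 ω := by
    intro ω hω
    have h0 : Z ω = 0 := by
      rcases hZbin ω with h | h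
      · exact h
      · exact absurd h hω
    simp [hY, h0]
  -- MemLp for Y
  have hYm : MemLp Y 2 μ := by
    have hYeq : Y = fun ω => A.indicator Y1 ω + Aᶜ.indicator Y0 ω := by
      funext ω
      rcases hZbin ω with h | h <;>
        simp [hY, h, Set.indicator_apply, hAdef, Set.mem_preimage]
    rw [hYeq]
    exact (hY1.indicator hA).add (hY0.indicator hA.compl)
  -- abbreviations
  set a1 := ∫ ω, Y1 ω ∂(μ[|A]) with ha1
  set b1 := ∫ ω, Y1 ω ^ 2 ∂(μ[|A]) with hb1
  set a0A := ∫ ω, Y0 ω ∂(μ[|A]) with ha0A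
  set b0A := ∫ ω, Y0 ω ^ 2 ∂(μ[|A]) with hb0A
  set a0 := ∫ ω, Y0 ω ∂(μ[|Aᶜ]) with ha0
  set b0 := ∫ ω, Y0 ω ^ 2 ∂(μ[|Aᶜ]) with hb0
  -- β and τ
  have hβ' : β = a1 - a0 := by
    rw [hβ, hB, two_point_cond_congr μ hA hYA, two_point_cond_congr μ hA.compl hYAc]
  have hτ' : τ = a1 - a0A := by
    rw [hτ, integral_sub ((two_point_memLp_cond μ A hY1 hμA0).integrable one_le_two)
      ((two_point_memLp_cond μ A hY0 hμA0).integrable one_le_two)]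
  -- variances
  have hσ2' : σ2 = (p * b1 + (1-p) * b0) - (p * a1 + (1-p) * a0)^2 := by
    rw [hσ2, two_point_var_split μ hA hpA hpAc hp0' hp1' hYm,
      two_point_cond_congr μ hA hYA, two_point_cond_congr μ hA.compl hYAc,
      two_point_cond_congr μ hA (fun ω hω => by rw [hYA ω hω]),
      two_point_cond_congr μ hA.compl (fun ω hω => by rw [hYAc ω hω])]
  have hσ02' : σ02 = (p * b0A + (1-p) * b0) - (p * a0A + (1-p) * a0)^2 := by
    rw [hσ02, two_point_var_split μ hA hpA hpAc hp0' hp1' hY0]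
  have hvareq' : b0A - a0A^2 = b1 - a1^2 := by
    have e0 := variance_eq_sub (two_point_memLp_cond μ A hY0 hμA0)
    have e1 := variance_eq_sub (two_point_memLp_cond μ A hY1 hμA0)
    simp only [Pi.pow_apply] at e0 e1
    rw [e0, e1] at hvareq
    exact hvareq
  -- key algebraic identity
  have key : σ2 - σ02 = p * (1-p) * (β^2 - (β - τ)^2) := by
    rw [hσ2', hσ02', hβ', hτ']
    linear_combination -p * hvareq'
  have hrad : β ^ 2 - (σ2 - σ02) / (p * (1 - p)) = (β - τ)^2 := by
    have hpp : p * (1 - p) ≠ 0 := mul_ne_zero hp0' hp1'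
    field_simp
    linear_combination -key
  constructor
  · rw [hrad, Real.sqrt_sq_eq_abs]
    rcases abs_cases (β - τ) with ⟨h, _⟩ | ⟨h, _⟩
    · right; rw [h]; ring
    · left; rw [h]; ring
  · rw [hrad]; positivity
end

section
/- (Unbiasedness collapses the two points.) In the setup of the two-point identification identity, if additionally E[Y(0)|Z=1] = E[Y(0)|Z=0], then σ² − σ₀² = p(1−p)·β² and both candidate values coincide: τ = β. -/
open MeasureTheory ProbabilityTheory

private lemma cond_integral_eq {Ω : Type*} [MeasurableSpace Ω] (μ : Measure Ω) (s : Set Ω)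
    (f : Ω → ℝ) : ∫ ω, f ω ∂(μ[|s]) = (μ s).toReal⁻¹ * ∫ ω in s, f ω ∂μ := by
  rw [ProbabilityTheory.cond, integral_smul_measure, ENNReal.toReal_inv, smul_eq_mul]

/-- Unbiasedness collapses the two points: if additionally
`E[Y(0)|Z=1] = E[Y(0)|Z=0]`, then `σ² − σ₀² = p(1−p)β²` and `τ = β`. -/
theorem unbiased_collapse
    {Ω : Type*} [MeasurableSpace Ω] (μ : Measure Ω) [IsProbabilityMeasure μ]
    (Y0 Y1 Z : Ω → ℝ) (hY0 : MemLp Y0 2 μ) (hY1 : MemLp Y1 2 μ)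
    (hZ : Measurable Z) (hZbin : ∀ ω, Z ω = 0 ∨ Z ω = 1)
    (p : ℝ) (hp : p = (μ (Z ⁻¹' {1})).toReal) (hp0 : 0 < p) (hp1 : p < 1)
    (Y : Ω → ℝ) (hY : Y = fun ω => Z ω * Y1 ω + (1 - Z ω) * Y0 ω)
    (β τ σ2 σ02 : ℝ)
    (hβ : β = (∫ ω, Y ω ∂(μ[|Z ⁻¹' {1}])) - (∫ ω, Y ω ∂(μ[|Z ⁻¹' {0}])))
    (hτ : τ = ∫ ω, (Y1 ω - Y0 ω) ∂(μ[|Z ⁻¹' {1}]))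
    (hσ2 : σ2 = variance Y μ) (hσ02 : σ02 = variance Y0 μ)
    (hvareq : variance Y0 (μ[|Z ⁻¹' {1}]) = variance Y1 (μ[|Z ⁻¹' {1}]))
    (hmeaneq : (∫ ω, Y0 ω ∂(μ[|Z ⁻¹' {1}])) = ∫ ω, Y0 ω ∂(μ[|Z ⁻¹' {0}])) :
    σ2 - σ02 = p * (1 - p) * β ^ 2 ∧ τ = β := by
  set A : Set Ω := Z ⁻¹' {1} with hAdef
  have hA : MeasurableSet A := hZ (measurableSet_singleton 1)
  have hBA : Z ⁻¹' {0} = Aᶜ := by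
    ext ω
    rcases hZbin ω with h | h <;> simp [hAdef, Set.mem_preimage, h]
  -- measures
  have hμA : (μ A).toReal = p := hp.symm
  have hAne : μ A ≠ 0 := by
    intro h; rw [h] at hμA; simp at hμA; linarith
  have hμAc : (μ Aᶜ).toReal = 1 - p := by
    rw [measure_compl hA (measure_ne_top μ A), measure_univ,
      ENNReal.toReal_sub_of_le prob_le_one (by simp), hμA, ENNReal.toReal_one]
  have hAcne : μ Aᶜ ≠ 0 := by
    intro h; rw [h] at hμAc; simp at hμAc; linarith
  -- pointwise description of Y
  have hYA : ∀ ω ∈ A, Y ω = Y1 ω := by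
    intro ω hω
    have : Z ω = 1 := hω
    simp [hY, this]
  have hYAc : ∀ ω ∈ Aᶜ, Y ω = Y0 ω := by
    intro ω hω
    have : Z ω = 0 := by
      rcases hZbin ω with h | h
      · exact h
      · exact absurd h hω
    simp [hY, this]
  have hYeq : Y = A.indicator Y1 + Aᶜ.indicator Y0 := by
    funext ω
    by_cases hω : ω ∈ A
    · simp [Set.indicator_of_mem hω, Set.indicator_of_notMem (Set.notMem_compl_iff.mpr hω),
        hYA ω hω]
    · simp [Set.indicator_of_notMem hω, Set.indicator_of_mem (Set.mem_compl hω),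
        hYAc ω hω]
  have hYL2 : MemLp Y 2 μ := by
    rw [hYeq]; exact (hY1.indicator hA).add (hY0.indicator hA.compl)
  -- abbreviations
  set a1 := ∫ ω in A, Y1 ω ∂μ with ha1
  set a0 := ∫ ω in A, Y0 ω ∂μ with ha0
  set b0 := ∫ ω in Aᶜ, Y0 ω ∂μ with hb0
  set s1 := ∫ ω in A, (Y1 ω) ^ 2 ∂μ with hs1
  set s0 := ∫ ω in A, (Y0 ω) ^ 2 ∂μ with hs0
  set t0 := ∫ ω in Aᶜ, (Y0 ω) ^ 2 ∂μ with ht0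
  -- set-integral identifications for Y
  have hIYA : ∫ ω in A, Y ω ∂μ = a1 :=
    setIntegral_congr_fun hA (fun ω hω => hYA ω hω)
  have hIYAc : ∫ ω in Aᶜ, Y ω ∂μ = b0 :=
    setIntegral_congr_fun hA.compl (fun ω hω => hYAc ω hω)
  have hIY2A : ∫ ω in A, (Y ω) ^ 2 ∂μ = s1 :=
    setIntegral_congr_fun hA (fun ω hω => by rw [hYA ω hω])
  have hIY2Ac : ∫ ω in Aᶜ, (Y ω) ^ 2 ∂μ = t0 :=
    setIntegral_congr_fun hA.compl (fun ω hω => by rw [hYAc ω hω])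
  -- variance over μ
  have hvar : ∀ (f : Ω → ℝ), MemLp f 2 μ →
      variance f μ = (∫ ω in A, (f ω) ^ 2 ∂μ + ∫ ω in Aᶜ, (f ω) ^ 2 ∂μ)
        - (∫ ω in A, f ω ∂μ + ∫ ω in Aᶜ, f ω ∂μ) ^ 2 := by
    intro f hf
    rw [variance_eq_sub hf]
    have h1 : μ[f ^ 2] = ∫ ω, (f ω) ^ 2 ∂μ := by simp [Pi.pow_apply]
    rw [h1, ← integral_add_compl hA hf.integrable_sq,
      ← integral_add_compl hA (hf.integrable one_le_two)]
  have hσ2' : σ2 = (s1 + t0) - (a1 + b0) ^ 2 := by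
    rw [hσ2, hvar Y hYL2, hIYA, hIYAc, hIY2A, hIY2Ac]
  have hσ02' : σ02 = (s0 + t0) - (a0 + b0) ^ 2 := by
    rw [hσ02, hvar Y0 hY0]
  -- conditional measure facts
  have hprobA : IsProbabilityMeasure (μ[|A]) := cond_isProbabilityMeasure hAne
  have hcondL2 : ∀ (f : Ω → ℝ), MemLp f 2 μ → MemLp f 2 (μ[|A]) := by
    intro f hf
    exact (hf.restrict A).smul_measure (by simp [hAne])
  have hvarcond : ∀ (f : Ω → ℝ), MemLp f 2 μ →
      variance f (μ[|A]) = p⁻¹ * (∫ ω in A, (f ω) ^ 2 ∂μ)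
        - (p⁻¹ * ∫ ω in A, f ω ∂μ) ^ 2 := by
    intro f hf
    rw [variance_eq_sub (hcondL2 f hf)]
    have h1 : μ[|A][f ^ 2] = ∫ ω, (f ω) ^ 2 ∂(μ[|A]) := by simp [Pi.pow_apply]
    rw [h1, cond_integral_eq, cond_integral_eq, hμA]
  -- translate hvareq
  have hveq : p⁻¹ * s0 - (p⁻¹ * a0) ^ 2 = p⁻¹ * s1 - (p⁻¹ * a1) ^ 2 := by
    rw [← hvarcond Y0 hY0, ← hvarcond Y1 hY1]; exact hvareq
  -- translate hmeaneq
  have hmeq : p⁻¹ * a0 = (1 - p)⁻¹ * b0 := by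
    have := hmeaneq
    rw [cond_integral_eq, hBA, cond_integral_eq, hμA, hμAc] at this
    exact this
  -- translate hβ
  have hβ' : β = p⁻¹ * a1 - (1 - p)⁻¹ * b0 := by
    rw [hβ, cond_integral_eq, hBA, cond_integral_eq, hμA, hμAc, hIYA, hIYAc]
  -- translate hτ
  have hτ' : τ = p⁻¹ * (a1 - a0) := by
    rw [hτ, cond_integral_eq, hμA,
      integral_sub ((hY1.integrable one_le_two).restrict)
        ((hY0.integrable one_le_two).restrict)]
  -- final algebra
  have hpne : p ≠ 0 := ne_of_gt hp0
  have hpne1 : (1 : ℝ) - p ≠ 0 := by linarith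
  have hveq' : p * s0 - a0 ^ 2 = p * s1 - a1 ^ 2 := by
    field_simp at hveq
    apply mul_left_cancel₀ hpne
    linear_combination p * hveq
  have hmeq' : (1 - p) * a0 = p * b0 := by
    field_simp at hmeq
    linear_combination hmeq
  have hβ2 : β = p⁻¹ * (a1 - a0) := by rw [hβ', ← hmeq]; ring
  have hβp : p * β = a1 - a0 := by rw [hβ2]; field_simp
  constructor
  · apply mul_left_cancel₀ hpne
    rw [hσ2', hσ02']
    have hR : p * (p * (1 - p) * β ^ 2) = (1 - p) * (p * β) ^ 2 := by ring
    rw [hR, hβp]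
    linear_combination (-1 : ℝ) * hveq' + 2 * (a1 - a0) * hmeq'
  · rw [hτ', hβ2]
end

section
/- (Closed-form bias in Example 1.) Let U, V be independent standard normal random variables and x ∈ ℝ. Then E[|U|·Φ(U+x)] = √(2/π)·Φ(x) − (2√π)^{−1}·exp(−x²/4)·erf(x/2), where Φ is the standard normal CDF and erf is the error function. -/
open MeasureTheory ProbabilityTheory

/-- The standard normal density `φ`. -/
noncomputable def stdGaussianPDF : ℝ → ℝ := gaussianPDFReal 0 1

/-- The standard normal CDF `Φ`. -/
noncomputable def stdGaussianCDF (u : ℝ) : ℝ := ∫ t in Set.Iic u, stdGaussianPDF t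

/-- The error function `erf z = (2/√π) ∫₀^z e^{−t²} dt`. -/
noncomputable def erf (z : ℝ) : ℝ :=
  (2 / Real.sqrt Real.pi) * ∫ t in (0:ℝ)..z, Real.exp (-t ^ 2)

open Real Set Filter
open scoped ENNReal NNReal

lemma stdGaussianPDF_def (u : ℝ) :
    stdGaussianPDF u = (Real.sqrt (2 * π))⁻¹ * Real.exp (-u ^ 2 / 2) := by
  simp [stdGaussianPDF, gaussianPDFReal]

lemma continuous_stdGaussianPDF : Continuous stdGaussianPDF := by
  simp only [funext stdGaussianPDF_def]
  fun_prop

lemma stdGaussianPDF_nonneg (u : ℝ) : 0 ≤ stdGaussianPDF u :=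
  gaussianPDFReal_nonneg 0 1 u

lemma integrable_stdGaussianPDF : Integrable stdGaussianPDF :=
  integrable_gaussianPDFReal 0 1

lemma integral_stdGaussianPDF : ∫ u, stdGaussianPDF u = 1 :=
  integral_gaussianPDFReal_eq_one 0 one_ne_zero

lemma stdGaussianPDF_le (u : ℝ) : stdGaussianPDF u ≤ (Real.sqrt (2 * π))⁻¹ := by
  rw [stdGaussianPDF_def]
  have h1 : Real.exp (-u ^ 2 / 2) ≤ 1 := by
    rw [Real.exp_le_one_iff]
    nlinarith [sq_nonneg u]
  have h2 : (0:ℝ) ≤ (Real.sqrt (2 * π))⁻¹ := by positivity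
  nlinarith

lemma stdGaussianPDF_neg (u : ℝ) : stdGaussianPDF (-u) = stdGaussianPDF u := by
  simp [stdGaussianPDF_def]

/-- Conversion of gaussian integral to Lebesgue integral with density. -/
lemma integral_gaussian_eq (f : ℝ → ℝ) :
    ∫ u, f u ∂(gaussianReal 0 1) = ∫ u, f u * stdGaussianPDF u := by
  rw [gaussianReal_of_var_ne_zero _ one_ne_zero]
  have : gaussianPDF 0 1 = fun x => ((gaussianPDFReal 0 1 x).toNNReal : ℝ≥0∞) := by
    ext x; rfl
  rw [this, integral_withDensity_eq_integral_smul
    (measurable_gaussianPDFReal 0 1).real_toNNReal f]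
  congr 1
  ext u
  rw [NNReal.smul_def, smul_eq_mul, mul_comm]
  congr 1
  exact Real.coe_toNNReal _ (gaussianPDFReal_nonneg 0 1 u)

lemma integrable_gaussian_iff (f : ℝ → ℝ) :
    Integrable f (gaussianReal 0 1) ↔ Integrable (fun u => f u * stdGaussianPDF u) := by
  rw [gaussianReal_of_var_ne_zero _ one_ne_zero]
  have : gaussianPDF 0 1 = fun x => ((gaussianPDFReal 0 1 x).toNNReal : ℝ≥0∞) := by
    ext x; rfl
  rw [this, integrable_withDensity_iff_integrable_smul
    (measurable_gaussianPDFReal 0 1).real_toNNReal]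
  have heq : ∀ u, (gaussianPDFReal 0 1 u).toNNReal • f u = f u * stdGaussianPDF u := by
    intro u
    rw [NNReal.smul_def, smul_eq_mul, mul_comm]
    congr 1
    exact Real.coe_toNNReal _ (gaussianPDFReal_nonneg 0 1 u)
  constructor <;> intro h
  · exact h.congr (Filter.Eventually.of_forall fun u => heq u)
  · exact h.congr (Filter.Eventually.of_forall fun u => (heq u).symm)

lemma stdGaussianCDF_eq (y : ℝ) :
    stdGaussianCDF y = stdGaussianCDF 0 + ∫ t in (0:ℝ)..y, stdGaussianPDF t := by
  rw [stdGaussianCDF, stdGaussianCDF, ← intervalIntegral.integral_Iic_sub_Iic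
    integrable_stdGaussianPDF.integrableOn integrable_stdGaussianPDF.integrableOn]
  ring

lemma hasDerivAt_stdGaussianCDF (y : ℝ) :
    HasDerivAt stdGaussianCDF (stdGaussianPDF y) y := by
  have h : HasDerivAt (fun y => stdGaussianCDF 0 + ∫ t in (0:ℝ)..y, stdGaussianPDF t)
      (stdGaussianPDF y) y := by
    refine HasDerivAt.const_add _ ?_
    exact intervalIntegral.integral_hasDerivAt_right
      (integrable_stdGaussianPDF.intervalIntegrable)
      (continuous_stdGaussianPDF.stronglyMeasurableAtFilter _ _)
      continuous_stdGaussianPDF.continuousAt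
  exact h.congr_of_eventuallyEq (Filter.Eventually.of_forall fun z => (stdGaussianCDF_eq z))

lemma continuous_stdGaussianCDF : Continuous stdGaussianCDF := by
  have : Differentiable ℝ stdGaussianCDF := fun y => (hasDerivAt_stdGaussianCDF y).differentiableAt
  exact this.continuous

lemma stdGaussianCDF_nonneg (y : ℝ) : 0 ≤ stdGaussianCDF y :=
  integral_nonneg fun t => stdGaussianPDF_nonneg t

lemma stdGaussianCDF_le_one (y : ℝ) : stdGaussianCDF y ≤ 1 := by
  rw [← integral_stdGaussianPDF]
  exact setIntegral_le_integral integrable_stdGaussianPDF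
    (Filter.Eventually.of_forall fun t => stdGaussianPDF_nonneg t)

lemma stdGaussianCDF_add_neg (y : ℝ) : stdGaussianCDF y + stdGaussianCDF (-y) = 1 := by
  have h1 : stdGaussianCDF (-y) = ∫ t in Set.Ioi y, stdGaussianPDF t := by
    rw [stdGaussianCDF, ← integral_comp_neg_Ioi]
    simp_rw [stdGaussianPDF_neg]
  rw [h1, stdGaussianCDF, intervalIntegral.integral_Iic_add_Ioi integrable_stdGaussianPDF.integrableOn
    integrable_stdGaussianPDF.integrableOn, integral_stdGaussianPDF]

lemma stdGaussianCDF_zero : stdGaussianCDF 0 = 1 / 2 := by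
  have := stdGaussianCDF_add_neg 0
  rw [neg_zero] at this
  linarith

lemma hasDerivAt_erf (z : ℝ) :
    HasDerivAt erf (2 / Real.sqrt π * Real.exp (-z ^ 2)) z := by
  have hc : Continuous fun t : ℝ => Real.exp (-t ^ 2) := by fun_prop
  have hint : MeasureTheory.Integrable fun t : ℝ => Real.exp (-t ^ 2) := by
    have := integrable_exp_neg_mul_sq (b := 1) one_pos
    refine this.congr (Filter.Eventually.of_forall fun t => by ring_nf)
  have h : HasDerivAt (fun z => ∫ t in (0:ℝ)..z, Real.exp (-t ^ 2)) (Real.exp (-z ^ 2)) z :=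
    intervalIntegral.integral_hasDerivAt_right
      hint.intervalIntegrable
      (hc.stronglyMeasurableAtFilter _ _) hc.continuousAt
  exact (h.const_mul (2 / Real.sqrt π)).congr_of_eventuallyEq
      (Filter.Eventually.of_forall fun w => rfl)

lemma erf_zero : erf 0 = 0 := by simp [erf]

lemma integrable_exp_neg_sq : MeasureTheory.Integrable fun t : ℝ => Real.exp (-t ^ 2) :=
  (integrable_exp_neg_mul_sq (b := 1) one_pos).congr
    (Filter.Eventually.of_forall fun t => by ring_nf)

lemma integrable_mul_exp_neg_sq : MeasureTheory.Integrable fun t : ℝ => t * Real.exp (-t ^ 2) :=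
  (integrable_mul_exp_neg_mul_sq (b := 1) one_pos).congr
    (Filter.Eventually.of_forall fun t => by ring_nf)

lemma hasDerivAt_neg_exp_sq (t : ℝ) :
    HasDerivAt (fun t : ℝ => -Real.exp (-t ^ 2) / 2) (t * Real.exp (-t ^ 2)) t := by
  have h : HasDerivAt (fun t : ℝ => Real.exp (-t ^ 2)) (Real.exp (-t ^ 2) * (-(2 * t))) t := by
    have h1 : HasDerivAt (fun t : ℝ => -t ^ 2) (-(2 * t)) t := by
      have := (hasDerivAt_pow 2 t).neg
      refine this.congr_deriv (Eq.symm ?_)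
      ring
    exact (Real.hasDerivAt_exp _).comp t h1
  have := (h.neg).div_const 2
  refine this.congr_deriv (Eq.symm ?_)
  ring

lemma tendsto_exp_neg_sq_atTop :
    Filter.Tendsto (fun t : ℝ => -Real.exp (-t ^ 2) / 2) Filter.atTop (nhds 0) := by
  have h1 : Filter.Tendsto (fun t : ℝ => t ^ 2) Filter.atTop Filter.atTop :=
    tendsto_pow_atTop two_ne_zero
  have h2 := (Real.tendsto_exp_neg_atTop_nhds_zero).comp h1
  have := (h2.neg).div_const 2
  simpa using this

lemma tendsto_exp_neg_sq_atBot :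
    Filter.Tendsto (fun t : ℝ => -Real.exp (-t ^ 2) / 2) Filter.atBot (nhds 0) := by
  have h1 : Filter.Tendsto (fun t : ℝ => t ^ 2) Filter.atBot Filter.atTop := by
    have h0 := (tendsto_pow_atTop (n := 2) (two_ne_zero)).comp
      (Filter.tendsto_neg_atBot_atTop (G := ℝ))
    refine h0.congr fun t => ?_
    simp [Function.comp, neg_sq]
  have h2 := (Real.tendsto_exp_neg_atTop_nhds_zero).comp h1
  have := (h2.neg).div_const 2
  simpa using this

lemma integral_Ioi_mul_exp (a : ℝ) :
    ∫ t in Set.Ioi a, t * Real.exp (-t ^ 2) = Real.exp (-a ^ 2) / 2 := by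
  have := integral_Ioi_of_hasDerivAt_of_tendsto' (f := fun t : ℝ => -Real.exp (-t ^ 2) / 2)
    (a := a) (fun t _ => hasDerivAt_neg_exp_sq t) integrable_mul_exp_neg_sq.integrableOn
    tendsto_exp_neg_sq_atTop
  rw [this]; ring

lemma integral_Iic_mul_exp (a : ℝ) :
    ∫ t in Set.Iic a, t * Real.exp (-t ^ 2) = -Real.exp (-a ^ 2) / 2 := by
  have := integral_Iic_of_hasDerivAt_of_tendsto' (f := fun t : ℝ => -Real.exp (-t ^ 2) / 2)
    (a := a) (fun t _ => hasDerivAt_neg_exp_sq t) integrable_mul_exp_neg_sq.integrableOn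
    tendsto_exp_neg_sq_atBot
  rw [this]; ring

lemma integral_exp_neg_sq : ∫ t : ℝ, Real.exp (-t ^ 2) = Real.sqrt π := by
  have := integral_gaussian 1
  simp only [div_one] at this
  rw [← this]
  congr 1; ext t; ring_nf

lemma integral_Iic_exp_sq (a : ℝ) :
    ∫ t in Set.Iic a, Real.exp (-t ^ 2)
      = Real.sqrt π / 2 + ∫ t in (0:ℝ)..a, Real.exp (-t ^ 2) := by
  have h0 : ∫ t in Set.Iic (0:ℝ), Real.exp (-t ^ 2) = Real.sqrt π / 2 := by
    have hsym : ∫ t in Set.Iic (0:ℝ), Real.exp (-t ^ 2)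
        = ∫ t in Set.Ioi (0:ℝ), Real.exp (-t ^ 2) := by
      have := integral_comp_neg_Ioi (0:ℝ) (fun t => Real.exp (-t ^ 2))
      rw [neg_zero] at this
      rw [← this]
      congr 1; funext t; rw [neg_sq]
    have hsum := intervalIntegral.integral_Iic_add_Ioi (b := (0:ℝ))
      integrable_exp_neg_sq.integrableOn integrable_exp_neg_sq.integrableOn
    rw [integral_exp_neg_sq] at hsum
    linarith [hsym ▸ hsum]
  have := intervalIntegral.integral_Iic_sub_Iic (f := fun t : ℝ => Real.exp (-t ^ 2))
    (a := (0:ℝ)) (b := a) integrable_exp_neg_sq.integrableOn integrable_exp_neg_sq.integrableOn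
  rw [h0] at this
  linarith

lemma integral_Ioi_exp_sq (a : ℝ) :
    ∫ t in Set.Ioi a, Real.exp (-t ^ 2)
      = Real.sqrt π / 2 - ∫ t in (0:ℝ)..a, Real.exp (-t ^ 2) := by
  have hsum := intervalIntegral.integral_Iic_add_Ioi (b := a)
    integrable_exp_neg_sq.integrableOn integrable_exp_neg_sq.integrableOn
  rw [integral_exp_neg_sq, integral_Iic_exp_sq] at hsum
  linarith

lemma sqrt_pi_pos : 0 < Real.sqrt π := Real.sqrt_pos.mpr Real.pi_pos

lemma sqrt_pi_mul_erf (a : ℝ) :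
    Real.sqrt π * erf a = 2 * ∫ t in (0:ℝ)..a, Real.exp (-t ^ 2) := by
  rw [erf]
  field_simp

lemma integrable_abs_sub_mul_exp (a : ℝ) :
    MeasureTheory.Integrable fun t : ℝ => |t - a| * Real.exp (-t ^ 2) := by
  have hg : MeasureTheory.Integrable fun t : ℝ =>
      |t| * Real.exp (-t ^ 2) + |a| * Real.exp (-t ^ 2) := by
    refine MeasureTheory.Integrable.add ?_ (integrable_exp_neg_sq.const_mul _)
    have := integrable_mul_exp_neg_sq.abs
    refine this.congr (Filter.Eventually.of_forall fun t => ?_)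
    simp [abs_mul, abs_of_nonneg (Real.exp_nonneg (-t ^ 2))]
  have hmeas : MeasureTheory.AEStronglyMeasurable
      (fun t : ℝ => |t - a| * Real.exp (-t ^ 2)) volume :=
    (((continuous_id.sub continuous_const).abs).mul (by fun_prop)).aestronglyMeasurable
  refine hg.mono' hmeas (Filter.Eventually.of_forall fun t => ?_)
  rw [Real.norm_eq_abs, abs_mul, abs_abs, abs_of_nonneg (Real.exp_nonneg _)]
  have h1 : |t - a| ≤ |t| + |a| := abs_sub t a
  nlinarith [Real.exp_nonneg (-t ^ 2), abs_nonneg t, abs_nonneg a]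

lemma integral_abs_mul_exp (a : ℝ) :
    ∫ u : ℝ, |u| * Real.exp (-(u + a) ^ 2)
      = Real.exp (-a ^ 2) + a * Real.sqrt π * erf a := by
  have step1 : ∫ u : ℝ, |u| * Real.exp (-(u + a) ^ 2)
      = ∫ t : ℝ, |t - a| * Real.exp (-t ^ 2) := by
    rw [← integral_add_right_eq_self (fun t : ℝ => |t - a| * Real.exp (-t ^ 2)) a]
    congr 1; funext u; rw [add_sub_cancel_right]
  have hIic : ∫ t in Set.Iic a, |t - a| * Real.exp (-t ^ 2)
      = a * (∫ t in Set.Iic a, Real.exp (-t ^ 2)) + Real.exp (-a ^ 2) / 2 := by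
    have hco : ∫ t in Set.Iic a, |t - a| * Real.exp (-t ^ 2)
        = ∫ t in Set.Iic a, (a * Real.exp (-t ^ 2) - t * Real.exp (-t ^ 2)) := by
      refine setIntegral_congr_fun measurableSet_Iic fun t ht => ?_
      rw [abs_of_nonpos (by simpa using ht)]
      ring
    rw [hco, integral_sub ((integrable_exp_neg_sq.const_mul a).integrableOn)
      integrable_mul_exp_neg_sq.integrableOn, integral_const_mul, integral_Iic_mul_exp]
    ring
  have hIoi : ∫ t in Set.Ioi a, |t - a| * Real.exp (-t ^ 2)
      = Real.exp (-a ^ 2) / 2 - a * ∫ t in Set.Ioi a, Real.exp (-t ^ 2) := by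
    have hco : ∫ t in Set.Ioi a, |t - a| * Real.exp (-t ^ 2)
        = ∫ t in Set.Ioi a, (t * Real.exp (-t ^ 2) - a * Real.exp (-t ^ 2)) := by
      refine setIntegral_congr_fun measurableSet_Ioi fun t ht => ?_
      rw [abs_of_nonneg (by simp at ht; linarith)]
      ring
    rw [hco, integral_sub integrable_mul_exp_neg_sq.integrableOn
      ((integrable_exp_neg_sq.const_mul a).integrableOn), integral_const_mul,
      integral_Ioi_mul_exp]
  have hsplit := intervalIntegral.integral_Iic_add_Ioi (b := a)
    (integrable_abs_sub_mul_exp a).integrableOn (integrable_abs_sub_mul_exp a).integrableOn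
  rw [step1, ← hsplit, hIic, hIoi]
  linear_combination a * integral_Iic_exp_sq a - a * integral_Ioi_exp_sq a
    - a * sqrt_pi_mul_erf a

lemma D_eq (x : ℝ) :
    ∫ u, |u| * stdGaussianPDF (u + x) ∂(gaussianReal 0 1)
      = (2 * π)⁻¹ * Real.exp (-x ^ 2 / 2)
        + x / (4 * Real.sqrt π) * (Real.exp (-x ^ 2 / 4) * erf (x / 2)) := by
  rw [integral_gaussian_eq]
  have h2π : Real.sqrt (2 * π) * Real.sqrt (2 * π) = 2 * π :=
    Real.mul_self_sqrt (by positivity)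
  have hA : (Real.sqrt (2 * π))⁻¹ * (Real.sqrt (2 * π))⁻¹ = (2 * π)⁻¹ := by
    rw [← mul_inv, h2π]
  have key : ∀ u : ℝ, |u| * stdGaussianPDF (u + x) * stdGaussianPDF u
      = ((2 * π)⁻¹ * Real.exp (-x ^ 2 / 4)) * (|u| * Real.exp (-(u + x / 2) ^ 2)) := by
    intro u
    rw [stdGaussianPDF_def, stdGaussianPDF_def]
    have hexp : Real.exp (-(u + x) ^ 2 / 2) * Real.exp (-u ^ 2 / 2)
        = Real.exp (-x ^ 2 / 4) * Real.exp (-(u + x / 2) ^ 2) := by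
      rw [← Real.exp_add, ← Real.exp_add]
      congr 1
      ring
    calc |u| * ((Real.sqrt (2 * π))⁻¹ * Real.exp (-(u + x) ^ 2 / 2))
          * ((Real.sqrt (2 * π))⁻¹ * Real.exp (-u ^ 2 / 2))
        = ((Real.sqrt (2 * π))⁻¹ * (Real.sqrt (2 * π))⁻¹)
            * (|u| * (Real.exp (-(u + x) ^ 2 / 2) * Real.exp (-u ^ 2 / 2))) := by ring
      _ = (2 * π)⁻¹ * (|u| * (Real.exp (-x ^ 2 / 4) * Real.exp (-(u + x / 2) ^ 2))) := by
          rw [hA, hexp]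
      _ = ((2 * π)⁻¹ * Real.exp (-x ^ 2 / 4)) * (|u| * Real.exp (-(u + x / 2) ^ 2)) := by ring
  simp_rw [key]
  rw [integral_const_mul, integral_abs_mul_exp (x / 2)]
  have hsq : -(x / 2) ^ 2 = -x ^ 2 / 4 := by ring
  rw [hsq]
  have hππ : Real.sqrt π * Real.sqrt π = π := Real.mul_self_sqrt Real.pi_pos.le
  have hexp2 : Real.exp (-x ^ 2 / 4) * Real.exp (-x ^ 2 / 4) = Real.exp (-x ^ 2 / 2) := by
    rw [← Real.exp_add]; congr 1; ring
  have hπpos := Real.pi_pos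
  have hspos := sqrt_pi_pos
  field_simp
  simp only [neg_div] at hexp2 ⊢
  linear_combination (8 * Real.sqrt π) * hexp2
    + (4 * x * Real.exp (-(x ^ 2 / 4)) * erf (x / 2)) * hππ

lemma integrable_abs_mul_pdf :
    MeasureTheory.Integrable (fun u : ℝ => |u| * stdGaussianPDF u) := by
  have h := (integrable_mul_exp_neg_mul_sq (b := 1/2) (by norm_num)).abs.const_mul
    ((Real.sqrt (2 * π))⁻¹)
  refine h.congr (Filter.Eventually.of_forall fun u => ?_)
  simp only
  rw [abs_mul, abs_of_nonneg (Real.exp_nonneg _), stdGaussianPDF_def]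
  have : -(1/2:ℝ) * u ^ 2 = -u ^ 2 / 2 := by ring
  rw [this]
  ring

lemma integrable_abs_gaussian :
    MeasureTheory.Integrable (fun u : ℝ => |u|) (gaussianReal 0 1) := by
  rw [integrable_gaussian_iff]
  exact integrable_abs_mul_pdf

lemma aesm_abs_mul_cdf (x : ℝ) :
    MeasureTheory.AEStronglyMeasurable (fun u : ℝ => |u| * stdGaussianCDF (u + x))
      (gaussianReal 0 1) :=
  (continuous_abs.mul (continuous_stdGaussianCDF.comp (by fun_prop))).aestronglyMeasurable

lemma integrable_abs_mul_cdf (x : ℝ) :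
    MeasureTheory.Integrable (fun u : ℝ => |u| * stdGaussianCDF (u + x))
      (gaussianReal 0 1) := by
  refine integrable_abs_gaussian.mono' (aesm_abs_mul_cdf x)
    (Filter.Eventually.of_forall fun u => ?_)
  rw [Real.norm_eq_abs, abs_mul, abs_abs,
    abs_of_nonneg (stdGaussianCDF_nonneg _)]
  calc |u| * stdGaussianCDF (u + x) ≤ |u| * 1 :=
        mul_le_mul_of_nonneg_left (stdGaussianCDF_le_one _) (abs_nonneg u)
    _ = |u| := mul_one _

lemma hasDerivAt_L (x₀ : ℝ) :
    HasDerivAt (fun x => ∫ u, |u| * stdGaussianCDF (u + x) ∂(gaussianReal 0 1))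
      (∫ u, |u| * stdGaussianPDF (u + x₀) ∂(gaussianReal 0 1)) x₀ := by
  have h := hasDerivAt_integral_of_dominated_loc_of_deriv_le (μ := gaussianReal 0 1)
    (F := fun x u => |u| * stdGaussianCDF (u + x))
    (F' := fun x u => |u| * stdGaussianPDF (u + x))
    (x₀ := x₀) (bound := fun u => |u| * (Real.sqrt (2 * π))⁻¹) (s := Metric.ball x₀ 1) (Metric.ball_mem_nhds x₀ one_pos)
    (Filter.Eventually.of_forall fun x => aesm_abs_mul_cdf x)
    (integrable_abs_mul_cdf x₀)
    ((continuous_abs.mul (continuous_stdGaussianPDF.comp (by fun_prop))).aestronglyMeasurable)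
    (Filter.Eventually.of_forall fun u => fun x _ => ?_)
    (integrable_abs_gaussian.mul_const _)
    (Filter.Eventually.of_forall fun u => fun x _ => ?_)
  · exact h.2
  · rw [Real.norm_eq_abs, abs_mul, abs_abs,
      abs_of_nonneg (stdGaussianPDF_nonneg _)]
    exact mul_le_mul_of_nonneg_left (stdGaussianPDF_le _) (abs_nonneg u)
  · have inner : HasDerivAt (fun x : ℝ => u + x) 1 x := (hasDerivAt_id x).const_add u
    have hcomp := (hasDerivAt_stdGaussianCDF (u + x)).comp x inner
    rw [mul_one] at hcomp
    exact hcomp.const_mul _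

lemma integral_Ioi_mul_exp_half :
    ∫ t in Set.Ioi (0:ℝ), t * Real.exp (-t ^ 2 / 2) = 1 := by
  have hderiv : ∀ t : ℝ, HasDerivAt (fun t : ℝ => -Real.exp (-t ^ 2 / 2))
      (t * Real.exp (-t ^ 2 / 2)) t := by
    intro t
    have h1 : HasDerivAt (fun t : ℝ => -t ^ 2 / 2) (-t) t := by
      have := ((hasDerivAt_pow 2 t).neg).div_const 2
      refine this.congr_deriv (Eq.symm ?_)
      ring
    have := ((Real.hasDerivAt_exp _).comp t h1).neg
    refine this.congr_deriv (Eq.symm ?_)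
    ring
  have hint : MeasureTheory.Integrable fun t : ℝ => t * Real.exp (-t ^ 2 / 2) :=
    (integrable_mul_exp_neg_mul_sq (b := 1/2) (by norm_num)).congr
      (Filter.Eventually.of_forall fun t => by ring_nf)
  have htend : Filter.Tendsto (fun t : ℝ => -Real.exp (-t ^ 2 / 2))
      Filter.atTop (nhds 0) := by
    have h1 : Filter.Tendsto (fun t : ℝ => t ^ 2 / 2) Filter.atTop Filter.atTop :=
      (tendsto_pow_atTop two_ne_zero).atTop_div_const two_pos
    have h2 := (Real.tendsto_exp_neg_atTop_nhds_zero).comp h1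
    have h3 := h2.neg
    simp only [neg_zero] at h3
    refine h3.congr fun t => ?_
    simp only [Function.comp]
    congr 1
    ring
  have := integral_Ioi_of_hasDerivAt_of_tendsto' (a := (0:ℝ))
    (fun t _ => hderiv t) hint.integrableOn htend
  rw [this]
  norm_num

lemma integral_abs_gaussian :
    ∫ u, |u| ∂(gaussianReal 0 1) = Real.sqrt (2 * π) * (2 * π)⁻¹ * 2 := by
  rw [integral_gaussian_eq]
  have hI : ∫ u : ℝ, |u| * stdGaussianPDF u
      = 2 * ∫ t in Set.Ioi (0:ℝ), t * stdGaussianPDF t := by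
    have h := integral_comp_abs (f := fun t => t * stdGaussianPDF t)
    rw [← h]
    refine integral_congr_ae (Filter.Eventually.of_forall fun u => ?_)
    simp only
    congr 1
    rw [stdGaussianPDF_def, stdGaussianPDF_def, sq_abs]
  rw [hI]
  have h2 : ∫ t in Set.Ioi (0:ℝ), t * stdGaussianPDF t = (Real.sqrt (2 * π))⁻¹ := by
    have : ∀ t : ℝ, t * stdGaussianPDF t
        = (Real.sqrt (2 * π))⁻¹ * (t * Real.exp (-t ^ 2 / 2)) := by
      intro t; rw [stdGaussianPDF_def]; ring
    simp_rw [this]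
    rw [integral_const_mul, integral_Ioi_mul_exp_half, mul_one]
  rw [h2]
  have h2π : Real.sqrt (2 * π) * Real.sqrt (2 * π) = 2 * π :=
    Real.mul_self_sqrt (by positivity)
  have hpos : (0:ℝ) < Real.sqrt (2 * π) := Real.sqrt_pos.mpr (by positivity)
  have hs2 : Real.sqrt 2 * Real.sqrt 2 = 2 := Real.mul_self_sqrt (by norm_num)
  have hsπ : Real.sqrt π * Real.sqrt π = π := Real.mul_self_sqrt Real.pi_pos.le
  have h22 : (Real.sqrt 2 * Real.sqrt π) * (Real.sqrt 2 * Real.sqrt π) = 2 * π := by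
    rw [mul_mul_mul_comm, hs2, hsπ]
  field_simp
  linear_combination (-1 : ℝ) * h2π

lemma gaussian_map_neg :
    (gaussianReal 0 1).map (fun u : ℝ => -u) = gaussianReal 0 1 := by
  have h := gaussianReal_map_const_mul (μ := 0) (v := 1) (-1)
  have h1 : (fun u : ℝ => -u) = fun u : ℝ => (-1 : ℝ) * u := by
    funext u; ring
  rw [h1, h]
  norm_num

lemma L_zero :
    ∫ u, |u| * stdGaussianCDF (u + 0) ∂(gaussianReal 0 1) = (Real.sqrt (2 * π))⁻¹ := by
  simp only [add_zero]
  have hmap : ∫ u, |u| * stdGaussianCDF u ∂(gaussianReal 0 1) = ∫ u, |u| * stdGaussianCDF (-u) ∂(gaussianReal 0 1) := by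
    conv_lhs => rw [← gaussian_map_neg]
    rw [integral_map measurable_neg.aemeasurable
      (f := fun u : ℝ => |u| * stdGaussianCDF u)
        ((continuous_abs.mul continuous_stdGaussianCDF).aestronglyMeasurable)]
    simp only [abs_neg]
  have hint1 : MeasureTheory.Integrable (fun u : ℝ => |u| * stdGaussianCDF u) (gaussianReal 0 1) := by
    have := integrable_abs_mul_cdf 0
    simpa using this
  have hint2 : MeasureTheory.Integrable (fun u : ℝ => |u| * stdGaussianCDF (-u)) (gaussianReal 0 1) := by
    refine integrable_abs_gaussian.mono'
      ((continuous_abs.mul (continuous_stdGaussianCDF.comp continuous_neg)).aestronglyMeasurable)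
      (Filter.Eventually.of_forall fun u => ?_)
    rw [Real.norm_eq_abs, abs_mul, abs_abs, abs_of_nonneg (stdGaussianCDF_nonneg _)]
    calc |u| * stdGaussianCDF (-u) ≤ |u| * 1 :=
          mul_le_mul_of_nonneg_left (stdGaussianCDF_le_one _) (abs_nonneg u)
      _ = |u| := mul_one _
  have hsum : (∫ u, |u| * stdGaussianCDF u ∂(gaussianReal 0 1)) + ∫ u, |u| * stdGaussianCDF (-u) ∂(gaussianReal 0 1)
      = ∫ u, |u| ∂(gaussianReal 0 1) := by
    rw [← integral_add hint1 hint2]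
    refine integral_congr_ae (Filter.Eventually.of_forall fun u => ?_)
    simp only
    rw [← mul_add, stdGaussianCDF_add_neg, mul_one]
  have habs := integral_abs_gaussian
  have h2π : Real.sqrt (2 * π) * Real.sqrt (2 * π) = 2 * π :=
    Real.mul_self_sqrt (by positivity)
  have hpos : (0:ℝ) < Real.sqrt (2 * π) := Real.sqrt_pos.mpr (by positivity)
  have : 2 * ∫ u, |u| * stdGaussianCDF u ∂(gaussianReal 0 1) = Real.sqrt (2 * π) * (2 * π)⁻¹ * 2 := by
    rw [← habs, ← hsum, ← hmap]; ring
  have hval : Real.sqrt (2 * π) * (2 * π)⁻¹ * 2 = 2 * (Real.sqrt (2 * π))⁻¹ := by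
    rw [← h2π, mul_inv]
    field_simp
    rw [Real.sqrt_sq hpos.le]
  rw [hval] at this
  linarith

lemma hasDerivAt_R (x : ℝ) :
    HasDerivAt (fun x => Real.sqrt (2 / π) * stdGaussianCDF x
        - (2 * Real.sqrt π)⁻¹ * Real.exp (-x ^ 2 / 4) * erf (x / 2))
      ((2 * π)⁻¹ * Real.exp (-x ^ 2 / 2)
        + x / (4 * Real.sqrt π) * (Real.exp (-x ^ 2 / 4) * erf (x / 2))) x := by
  have hΦ : HasDerivAt (fun x => Real.sqrt (2 / π) * stdGaussianCDF x)
      (Real.sqrt (2 / π) * stdGaussianPDF x) x :=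
    (hasDerivAt_stdGaussianCDF x).const_mul _
  have hE : HasDerivAt (fun x : ℝ => Real.exp (-x ^ 2 / 4))
      (-x / 2 * Real.exp (-x ^ 2 / 4)) x := by
    have h1 : HasDerivAt (fun x : ℝ => -x ^ 2 / 4) (-x / 2) x := by
      have := ((hasDerivAt_pow 2 x).neg).div_const 4
      refine this.congr_deriv (Eq.symm ?_)
      ring
    have := (Real.hasDerivAt_exp _).comp x h1
    refine this.congr_deriv (Eq.symm ?_)
    ring
  have hErf : HasDerivAt (fun x : ℝ => erf (x / 2))
      (1 / Real.sqrt π * Real.exp (-x ^ 2 / 4)) x := by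
    have h1 : HasDerivAt (fun x : ℝ => x / 2) (1 / 2) x :=
      (hasDerivAt_id x).div_const 2
    have := (hasDerivAt_erf (x / 2)).comp x h1
    have hsq : -(x / 2) ^ 2 = -x ^ 2 / 4 := by ring
    rw [hsq] at this
    refine this.congr_deriv (Eq.symm ?_)
    ring
  have hprod := (hE.const_mul ((2 * Real.sqrt π)⁻¹)).mul hErf
  have htotal := hΦ.sub hprod
  refine htotal.congr_deriv (Eq.symm ?_)
  rw [stdGaussianPDF_def]
  have hsπ : Real.sqrt π * Real.sqrt π = π := Real.mul_self_sqrt Real.pi_pos.le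
  have hs2 : Real.sqrt 2 * Real.sqrt 2 = 2 := Real.mul_self_sqrt (by norm_num)
  have hsplit : Real.sqrt (2 * π) = Real.sqrt 2 * Real.sqrt π := Real.sqrt_mul (by norm_num) _
  have hsplit2 : Real.sqrt (2 / π) = Real.sqrt 2 / Real.sqrt π :=
    Real.sqrt_div (by norm_num) π
  have hexp2 : Real.exp (-x ^ 2 / 4) * Real.exp (-x ^ 2 / 4) = Real.exp (-x ^ 2 / 2) := by
    rw [← Real.exp_add]; congr 1; ring
  rw [hsplit, hsplit2]
  have hπpos := Real.pi_pos
  have hspos := sqrt_pi_pos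
  have h2pos : (0:ℝ) < Real.sqrt 2 := Real.sqrt_pos.mpr (by norm_num)
  field_simp
  simp only [neg_div] at hexp2 ⊢
  linear_combination (8 * Real.exp (-(x ^ 2 / 2))) * hsπ
    + (8 * π) * hexp2

/-- Closed-form bias computation in Example 1: for `U ~ N(0,1)`,
`E[|U|·Φ(U+x)] = √(2/π)·Φ(x) − (2√π)⁻¹·exp(−x²/4)·erf(x/2)`. -/
theorem gaussian_abs_cdf_moment (x : ℝ) :
    (∫ u, |u| * stdGaussianCDF (u + x) ∂(gaussianReal 0 1))
      = Real.sqrt (2 / Real.pi) * stdGaussianCDF x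
        - (2 * Real.sqrt Real.pi)⁻¹ * Real.exp (-x ^ 2 / 4) * erf (x / 2) := by

  have hdiff : ∀ y : ℝ, HasDerivAt
      (fun z : ℝ => (∫ u, |u| * stdGaussianCDF (u + z) ∂(gaussianReal 0 1))
        - (Real.sqrt (2 / π) * stdGaussianCDF z
          - (2 * Real.sqrt π)⁻¹ * Real.exp (-z ^ 2 / 4) * erf (z / 2))) 0 y := by
    intro y
    have h1 := (hasDerivAt_L y).sub (hasDerivAt_R y)
    rw [D_eq y, sub_self] at h1
    exact h1
  have hconst := is_const_of_deriv_eq_zero (𝕜 := ℝ)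
    (f := fun z : ℝ => (∫ u, |u| * stdGaussianCDF (u + z) ∂(gaussianReal 0 1))
        - (Real.sqrt (2 / π) * stdGaussianCDF z
          - (2 * Real.sqrt π)⁻¹ * Real.exp (-z ^ 2 / 4) * erf (z / 2)))
    (fun y => (hdiff y).differentiableAt) (fun y => (hdiff y).deriv) x 0
  have hR0 : Real.sqrt (2 / π) * stdGaussianCDF 0
      - (2 * Real.sqrt π)⁻¹ * Real.exp (-(0:ℝ) ^ 2 / 4) * erf ((0:ℝ) / 2)
      = (Real.sqrt (2 * π))⁻¹ := by
    rw [stdGaussianCDF_zero, zero_div, erf_zero, mul_zero]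
    have hsplit : Real.sqrt (2 * π) = Real.sqrt 2 * Real.sqrt π :=
      Real.sqrt_mul (by norm_num) _
    have hsplit2 : Real.sqrt (2 / π) = Real.sqrt 2 / Real.sqrt π :=
      Real.sqrt_div (by norm_num) π
    have hs2 : Real.sqrt 2 * Real.sqrt 2 = 2 := Real.mul_self_sqrt (by norm_num)
    have hspos := sqrt_pi_pos
    have h2pos : (0:ℝ) < Real.sqrt 2 := Real.sqrt_pos.mpr (by norm_num)
    rw [hsplit, hsplit2]
    field_simp
    linear_combination hs2
  have hL0 := L_zero
  rw [hL0, hR0, sub_self] at hconst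
  linarith [hconst]
end
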